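/- arXiv:2304.05279 — 2 statements merged into one kernel-verified Lean document; each statement's English description precedes it below -/
import Mathlib

section
/- Let G be a finite directed graph with integer edge weights and no negative cycle, let W ≥ 1 be an integer, and suppose every edge weight of G is greater than −3W. Let H be the graph obtained by taking a copy of G with edge weights w_H(e) = ⌈w_G(e)/W⌉ + 1 and adding a new source vertex s with weight-0 edges from s to every other vertex. Define the potential φ(v) = W · dist_H(s, v). Then for every edge (u,v) of G, w_G(u,v) + φ(u) − φ(v) > −2W; that is, the reweighted graph G_φ has minimum edge weight greater than −2W. -/
variable {V : Type*}

/-- `IsWalkFrom E u v l`: the list of vertices `l` is a walk from `u` to `v` in the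
directed graph with edge relation `E`: it is nonempty, consecutive vertices are
joined by edges, it starts at `u` and ends at `v`. -/
def IsWalkFrom (E : V → V → Prop) (u v : V) (l : List V) : Prop :=
  l ≠ [] ∧ l.Chain' E ∧ l.head? = some u ∧ l.getLast? = some v

/-- The total weight of a walk: the sum of the weights of its consecutive edges. -/
def walkWeight (w : V → V → ℤ) (l : List V) : ℤ :=
  ((l.zip l.tail).map fun p => w p.1 p.2).sum

/-- The number of edges of a walk. -/
def numEdges (l : List V) : ℕ := l.length - 1

/-- A closed walk: a walk from some vertex back to itself with at least one edge. -/
def IsClosedWalk (E : V → V → Prop) (l : List V) : Prop :=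
  (∃ v, IsWalkFrom E v v l) ∧ 2 ≤ l.length

/-- A cycle: a closed walk in which no vertex repeats except the start/end vertex. -/
def IsCycle (E : V → V → Prop) (l : List V) : Prop :=
  IsClosedWalk E l ∧ l.tail.Nodup

/-- `l` is a shortest walk (path) from `u` to `v` w.r.t. weights `w`. -/
def IsShortestPath (E : V → V → Prop) (w : V → V → ℤ) (u v : V) (l : List V) : Prop :=
  IsWalkFrom E u v l ∧ ∀ l', IsWalkFrom E u v l' → walkWeight w l ≤ walkWeight w l'

/-- The mean weight of a (closed) walk, as a rational number. -/
def meanWeight (w : V → V → ℤ) (l : List V) : ℚ :=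
  (walkWeight w l : ℚ) / (numEdges l : ℚ)

/-- The number of negative-weight edges of a walk. -/
def negCount (w : V → V → ℤ) (l : List V) : ℕ :=
  ((l.zip l.tail).filter fun p => decide (w p.1 p.2 < 0)).length


lemma walkWeight_cons_cons (w : V → V → ℤ) (a b : V) (t : List V) :
    walkWeight w (a :: b :: t) = w a b + walkWeight w (b :: t) := by
  simp [walkWeight]

lemma walkWeight_concat (w : V → V → ℤ) :
    ∀ (l : List V) (a x : V),
      walkWeight w ((a :: l) ++ [x]) =
        walkWeight w (a :: l) + w ((a :: l).getLast (by simp)) x := by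
  intro l
  induction l with
  | nil => intro a x; simp [walkWeight]
  | cons b t ih =>
    intro a x
    have h := ih b x
    rw [List.cons_append] at h
    rw [List.cons_append, List.cons_append, walkWeight_cons_cons, h,
      walkWeight_cons_cons]
    simp [List.getLast]
    ring

/-- **One-step scaling increases the minimum weight.** Let `G` (no negative cycle) have
all edge weights greater than `−3W` with `W ≥ 1`. Let `H` be the graph on `Option V`
with a new source `none`, edges `some u → some v` (for edges `u → v` of `G`) of weight
`⌈w_G(u,v)/W⌉ + 1` and edges `none → some v` of weight `0` to every vertex. If
`d v = dist_H(none, some v)` (the minimum weight of a walk from the source to `v` in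
`H`, attained by some walk) and `φ(v) = W·d v`, then every edge `(u,v)` of `G`
satisfies `w_G(u,v) + φ(u) − φ(v) > −2W`. -/
theorem one_step_scaling {V : Type*} [Fintype V]
    (E : V → V → Prop) (w : V → V → ℤ)
    (hNoNegCycle : ¬ ∃ C, IsCycle E C ∧ walkWeight w C < 0)
    (W : ℤ) (hW : 1 ≤ W)
    (hlb : ∀ u v, E u v → -3 * W < w u v)
    (EH : Option V → Option V → Prop)
    (hEH : ∀ x y, EH x y ↔
      ((∃ u v, x = some u ∧ y = some v ∧ E u v) ∨ (x = none ∧ ∃ v : V, y = some v)))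
    (wH : Option V → Option V → ℤ)
    (hwH : ∀ u v : V, wH (some u) (some v) = ⌈(w u v : ℚ) / (W : ℚ)⌉ + 1)
    (hwH0 : ∀ v : V, wH none (some v) = 0)
    (d : V → ℤ)
    (hd : ∀ v, (∃ P, IsWalkFrom EH none (some v) P ∧ walkWeight wH P = d v) ∧
               (∀ P, IsWalkFrom EH none (some v) P → d v ≤ walkWeight wH P)) :
    ∀ u v, E u v → -2 * W < w u v + W * d u - W * d v := by
  intro u v huv
  obtain ⟨⟨P, hPwalk, hPw⟩, _⟩ := hd u
  obtain ⟨hPne, hPchain, hPhead, hPlast⟩ := hPwalk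
  obtain ⟨a, t, rfl⟩ := List.exists_cons_of_ne_nil hPne
  have ha : a = none := by simpa using hPhead
  subst ha
  have hlast : (none :: t).getLast (by simp) = some u := by
    have h := List.getLast?_eq_getLast (l := none :: t) (by simp)
    rw [h] at hPlast
    exact Option.some_injective _ hPlast
  have hQ : IsWalkFrom EH none (some v) ((none :: t) ++ [some v]) := by
    refine ⟨by simp, ?_, ?_, ?_⟩
    · refine List.IsChain.append hPchain (List.isChain_singleton _) ?_
      intro x hx y hy
      have hx' : x = some u := by
        rw [List.getLast?_eq_getLast (l := none :: t) (by simp), hlast] at hx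
        exact (by simpa using hx : some u = x).symm
      have hy' : y = some v := (by simpa using hy : some v = y).symm
      subst hx'; subst hy'
      exact (hEH _ _).mpr (Or.inl ⟨u, v, rfl, rfl, huv⟩)
    · simp
    · exact List.getLast?_concat
  have key := (hd v).2 _ hQ
  rw [walkWeight_concat, hPw, hlast, hwH] at key
  set c : ℤ := ⌈(w u v : ℚ) / (W : ℚ)⌉ with hc
  have hW0 : (0 : ℚ) < (W : ℚ) := by exact_mod_cast lt_of_lt_of_le one_pos hW
  have h1 : (c : ℚ) < (w u v : ℚ) / (W : ℚ) + 1 := Int.ceil_lt_add_one _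
  have h2 : ((W * c : ℤ) : ℚ) < ((w u v + W : ℤ) : ℚ) := by
    push_cast
    have := mul_lt_mul_of_pos_left h1 hW0
    rwa [mul_add, mul_one, mul_div_cancel₀ _ (ne_of_gt hW0)] at this
  have h3 : W * c < w u v + W := by exact_mod_cast h2
  have hm : W * d v ≤ W * (d u + (c + 1)) :=
    mul_le_mul_of_nonneg_left key (le_trans zero_le_one hW)
  nlinarith [hm, h3]
end

section
/- Let G be a directed graph on n vertices with integer edge weights and no negative cycle. Let G_0 be the copy of G with every edge weight multiplied by 4n, let φ : V → ℤ be any potential function, and set G_L = (G_0)_φ. Suppose every edge weight of G_L is at least −3, and let G* be the copy of G_L in which every negative edge weight is replaced by 0. Then every shortest u-v path in G* is a shortest u-v path in G (for all pairs of vertices u, v); consequently a shortest path tree from any source s in G* is a shortest path tree from s in G. -/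
variable {V : Type*}

/-! ### Auxiliary lemmas -/

lemma ww_nil (w : V → V → ℤ) : walkWeight w ([] : List V) = 0 := rfl

lemma ww_single (w : V → V → ℤ) (a : V) : walkWeight w [a] = 0 := rfl

lemma ww_cons (w : V → V → ℤ) (a b : V) (l : List V) :
    walkWeight w (a :: b :: l) = w a b + walkWeight w (b :: l) := by
  simp [walkWeight]

lemma ww_append (w : V → V → ℤ) (x : V) :
    ∀ (l₁ l₂ : List V),
      walkWeight w (l₁ ++ x :: l₂) = walkWeight w (l₁ ++ [x]) + walkWeight w (x :: l₂)
  | [], l₂ => by simp [ww_single]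
  | [a], l₂ => by simp [ww_cons, ww_single]
  | a :: b :: l₁, l₂ => by
    have h := ww_append w x (b :: l₁) l₂
    simp only [List.cons_append] at *
    rw [ww_cons, ww_cons, h]
    ring

lemma exists_dup_split : ∀ (l : List V), ¬ l.Nodup →
    ∃ (x : V) (l₁ l₂ l₃ : List V), l = l₁ ++ (x :: l₂) ++ (x :: l₃)
  | [], h => absurd List.nodup_nil h
  | a :: t, h => by
    by_cases ha : a ∈ t
    · obtain ⟨s₁, s₂, rfl⟩ := List.append_of_mem ha
      exact ⟨a, [], s₁, s₂, by simp⟩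
    · have ht : ¬ t.Nodup := fun hn => h (List.nodup_cons.mpr ⟨ha, hn⟩)
      obtain ⟨x, l₁, l₂, l₃, rfl⟩ := exists_dup_split t ht
      exact ⟨x, a :: l₁, l₂, l₃, by simp⟩

/-- Splitting a walk at a repeated vertex. -/
lemma split_walk {E : V → V → Prop} (w : V → V → ℤ) {t₁ t₂ t₃ : List V} {x : V}
    (hch : (t₁ ++ (x :: t₂) ++ (x :: t₃)).Chain' E) :
    (t₁ ++ x :: t₃).Chain' E ∧ ((x :: t₂) ++ [x]).Chain' E ∧
    walkWeight w (t₁ ++ (x :: t₂) ++ (x :: t₃))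
      = walkWeight w (t₁ ++ x :: t₃) + walkWeight w ((x :: t₂) ++ [x]) ∧
    (t₁ ++ (x :: t₂) ++ (x :: t₃)).head? = (t₁ ++ x :: t₃).head? ∧
    (t₁ ++ (x :: t₂) ++ (x :: t₃)).getLast? = (t₁ ++ x :: t₃).getLast? := by
  rw [List.append_assoc] at hch
  simp only [List.Chain'] at hch ⊢
  rw [List.isChain_append] at hch
  obtain ⟨hc₁, hc₂, hlink₁⟩ := hch
  rw [show (x :: t₂) ++ (x :: t₃) = (x :: t₂) ++ (x :: t₃) from rfl, List.isChain_append] at hc₂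
  obtain ⟨hc₂₁, hc₂₂, hlink₂⟩ := hc₂
  refine ⟨?_, ?_, ?_, ?_, ?_⟩
  · rw [List.isChain_append]
    exact ⟨hc₁, hc₂₂, fun a ha b hb => by
      simp only [List.head?_cons, Option.mem_def, Option.some.injEq] at hb
      subst hb
      exact hlink₁ a ha x (by simp)⟩
  · rw [List.isChain_append]
    exact ⟨hc₂₁, List.isChain_singleton x, fun a ha b hb => by
      simp only [List.head?_cons, Option.mem_def, Option.some.injEq] at hb
      subst hb
      exact hlink₂ a ha x (by simp)⟩
  · have e1 : walkWeight w (t₁ ++ (x :: t₂) ++ (x :: t₃))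
        = walkWeight w (t₁ ++ [x]) + walkWeight w ((x :: t₂) ++ (x :: t₃)) := by
      rw [show t₁ ++ (x :: t₂) ++ (x :: t₃) = t₁ ++ x :: (t₂ ++ x :: t₃) by simp]
      rw [ww_append w x t₁ (t₂ ++ x :: t₃)]
      simp
    have e2 : walkWeight w ((x :: t₂) ++ (x :: t₃))
        = walkWeight w ((x :: t₂) ++ [x]) + walkWeight w (x :: t₃) :=
      ww_append w x (x :: t₂) t₃
    have e3 : walkWeight w (t₁ ++ x :: t₃)
        = walkWeight w (t₁ ++ [x]) + walkWeight w (x :: t₃) := ww_append w x t₁ t₃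
    omega
  · rcases t₁ with _ | ⟨a, t₁⟩ <;> simp
  · rw [List.getLast?_append_cons, List.getLast?_append_cons]

/-- Every closed walk has nonnegative weight when there is no negative cycle. -/
lemma closedWalk_nonneg {E : V → V → Prop} {w : V → V → ℤ}
    (hNoNegCycle : ¬ ∃ C, IsCycle E C ∧ walkWeight w C < 0) :
    ∀ (N : ℕ) (l : List V), l.length ≤ N → IsClosedWalk E l → 0 ≤ walkWeight w l := by
  intro N
  induction N with
  | zero => intro l hlen hcw; exact absurd hcw.2 (by omega)
  | succ N ih =>
    intro l hlen hcw
    obtain ⟨⟨v, hne, hch, hhd, hlast⟩, hlen2⟩ := hcw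
    by_cases hnd : l.tail.Nodup
    · by_contra hneg
      exact hNoNegCycle ⟨l, ⟨⟨⟨v, hne, hch, hhd, hlast⟩, hlen2⟩, hnd⟩, by omega⟩
    · rcases l with _ | ⟨a, t⟩
      · exact absurd rfl hne
      have hav : a = v := by simpa using hhd
      subst hav
      simp only [List.tail_cons] at hnd
      obtain ⟨x, t₁, t₂, t₃, rfl⟩ := exists_dup_split t hnd
      have hl : a :: (t₁ ++ (x :: t₂) ++ (x :: t₃))
          = (a :: t₁) ++ (x :: t₂) ++ (x :: t₃) := by simp
      rw [hl] at hch hhd hlast hlen ⊢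
      obtain ⟨hc', hcC, hww, hhd', hlast'⟩ := split_walk (E := E) w hch
      have hCnn : 0 ≤ walkWeight w ((x :: t₂) ++ [x]) := by
        apply ih ((x :: t₂) ++ [x]) (by simp at hlen ⊢; omega)
        refine ⟨⟨x, by simp, hcC, by simp, ?_⟩, by simp⟩
        rw [List.getLast?_append_cons]; rfl
      have hl'nn : 0 ≤ walkWeight w ((a :: t₁) ++ x :: t₃) := by
        apply ih ((a :: t₁) ++ x :: t₃) (by simp at hlen ⊢; omega)
        refine ⟨⟨a, by simp, hc', ?_, ?_⟩, by simp; omega⟩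
        · rw [← hhd']; exact hhd
        · rw [← hlast']; exact hlast
      omega

/-- Any walk can be shortened to a walk of at most `card V` vertices without
increasing its weight, provided there is no negative cycle. -/
lemma exists_short_walk [Fintype V] {E : V → V → Prop} {w : V → V → ℤ}
    (hNoNegCycle : ¬ ∃ C, IsCycle E C ∧ walkWeight w C < 0) :
    ∀ (N : ℕ) (l : List V) (u v : V), l.length ≤ N → IsWalkFrom E u v l →
      ∃ l', IsWalkFrom E u v l' ∧ l'.length ≤ Fintype.card V ∧
        walkWeight w l' ≤ walkWeight w l := by
  intro N
  induction N with
  | zero => intro l u v hlen hw; exact absurd (List.length_eq_zero_iff.mp (by omega)) hw.1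
  | succ N ih =>
    intro l u v hlen hw
    by_cases hcard : l.length ≤ Fintype.card V
    · exact ⟨l, hw, hcard, le_refl _⟩
    · obtain ⟨hne, hch, hhd, hlast⟩ := hw
      have hndl : ¬ l.Nodup := fun h => hcard h.length_le_card
      obtain ⟨x, t₁, t₂, t₃, rfl⟩ := exists_dup_split l hndl
      obtain ⟨hc', hcC, hww, hhd', hlast'⟩ := split_walk (E := E) w hch
      have hwalk' : IsWalkFrom E u v (t₁ ++ x :: t₃) := by
        refine ⟨by simp, hc', ?_, ?_⟩
        · rw [← hhd']; exact hhd
        · rw [← hlast']; exact hlast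
      have hCnn : 0 ≤ walkWeight w ((x :: t₂) ++ [x]) := by
        apply closedWalk_nonneg hNoNegCycle (((x :: t₂) ++ [x]).length) _ le_rfl
        refine ⟨⟨x, by simp, hcC, by simp, ?_⟩, by simp⟩
        · rw [List.getLast?_append_cons]; rfl
      obtain ⟨l', hw', hlen', hle'⟩ :=
        ih (t₁ ++ x :: t₃) u v (by simp at hlen ⊢; omega) hwalk'
      exact ⟨l', hw', hlen', by omega⟩

/-- Telescoping identity for reweighted walks. -/
lemma ww_reweight {w : V → V → ℤ} {φ : V → ℤ} {c : ℤ} {wL : V → V → ℤ}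
    (hwL : ∀ a b, wL a b = c * w a b + φ a - φ b) :
    ∀ (l : List V) (u v : V), l.head? = some u → l.getLast? = some v →
      walkWeight wL l = c * walkWeight w l + φ u - φ v
  | [], u, v, h, _ => by simp at h
  | [a], u, v, hh, hl => by
    simp only [List.head?_cons, Option.some.injEq] at hh
    simp only [List.getLast?_singleton, Option.some.injEq] at hl
    subst hh; subst hl
    simp [ww_single]
  | a :: b :: t, u, v, hh, hl => by
    simp only [List.head?_cons, Option.some.injEq] at hh
    rw [List.getLast?_cons_cons] at hl
    have := ww_reweight hwL (b :: t) b v rfl hl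
    subst hh
    rw [ww_cons, ww_cons, this, hwL]
    ring

/-- Bounds between `wL` and `wstar` along a walk. -/
lemma ww_star_bounds {E : V → V → Prop} {wL wstar : V → V → ℤ}
    (hL : ∀ u v, E u v → -3 ≤ wL u v) (hwstar : ∀ u v, wstar u v = max (wL u v) 0) :
    ∀ l : List V, l.Chain' E →
      walkWeight wL l ≤ walkWeight wstar l ∧
      walkWeight wstar l ≤ walkWeight wL l + 3 * ((l.length - 1 : ℕ) : ℤ)
  | [] => fun _ => by simp [ww_nil]
  | [a] => fun _ => by simp [ww_single]
  | a :: b :: t => fun hch => by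
    simp only [List.Chain'] at hch
    rw [List.isChain_cons_cons] at hch
    obtain ⟨hab, hch'⟩ := hch
    obtain ⟨h₁, h₂⟩ := ww_star_bounds hL hwstar (b :: t) hch'
    have hstar₁ : wL a b ≤ wstar a b := by rw [hwstar]; exact le_max_left _ _
    have hstar₂ : wstar a b ≤ wL a b + 3 := by
      rw [hwstar]; have := hL a b hab
      rcases max_cases (wL a b) 0 with ⟨h, _⟩ | ⟨h, _⟩ <;> omega
    constructor
    · rw [ww_cons, ww_cons]; omega
    · rw [ww_cons, ww_cons]
      have hcast : (((a :: b :: t).length - 1 : ℕ) : ℤ)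
          = (((b :: t).length - 1 : ℕ) : ℤ) + 1 := by
        simp
      rw [hcast]; omega

/-- **Correctness of the final rounding step of the scaling algorithm.** Let `G` (on `n`
vertices, integer weights, no negative cycle) be given. Let `G₀` have weights
`4n·w(e)`, let `φ` be any potential, and let `G_L = (G₀)_φ`, i.e.
`w_L(u,v) = 4n·w(u,v) + φ(u) − φ(v)`. Suppose every edge weight of `G_L` is at least
`−3`, and let `G*` have weights `w*(u,v) = max{w_L(u,v), 0}`. Then for all vertices
`u, v`, every shortest `u`-`v` path in `G*` is a shortest `u`-`v` path in `G`. -/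
theorem rounded_shortest_paths_are_shortest {V : Type*} [Fintype V]
    (E : V → V → Prop) (w : V → V → ℤ)
    (hNoNegCycle : ¬ ∃ C, IsCycle E C ∧ walkWeight w C < 0)
    (φ : V → ℤ)
    (wL : V → V → ℤ)
    (hwL : ∀ u v, wL u v = 4 * (Fintype.card V : ℤ) * w u v + φ u - φ v)
    (hL : ∀ u v, E u v → -3 ≤ wL u v)
    (wstar : V → V → ℤ)
    (hwstar : ∀ u v, wstar u v = max (wL u v) 0) :
    ∀ (u v : V) (P : List V), IsShortestPath E wstar u v P → IsShortestPath E w u v P := by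
  intro u v P hP
  obtain ⟨hPwalk, hPmin⟩ := hP
  set n : ℕ := Fintype.card V with hn
  have hn1 : 1 ≤ n := Fintype.card_pos_iff.mpr ⟨u⟩
  refine ⟨hPwalk, ?_⟩
  intro Q hQ
  obtain ⟨Q', hQ'walk, hQ'len, hQ'le⟩ :=
    exists_short_walk hNoNegCycle Q.length Q u v le_rfl hQ
  have key : walkWeight w P ≤ walkWeight w Q' := by
    by_contra hcon
    push_neg at hcon
    -- hcon : walkWeight w Q' < walkWeight w P
    have hPL : walkWeight wL P = 4 * (n : ℤ) * walkWeight w P + φ u - φ v :=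
      ww_reweight hwL P u v hPwalk.2.2.1 hPwalk.2.2.2
    have hQL : walkWeight wL Q' = 4 * (n : ℤ) * walkWeight w Q' + φ u - φ v :=
      ww_reweight hwL Q' u v hQ'walk.2.2.1 hQ'walk.2.2.2
    obtain ⟨hP1, _⟩ := ww_star_bounds hL hwstar P hPwalk.2.1
    obtain ⟨_, hQ2⟩ := ww_star_bounds hL hwstar Q' hQ'walk.2.1
    have hmin := hPmin Q' hQ'walk
    have hQ'len1 : 1 ≤ Q'.length := List.length_pos_iff.mpr hQ'walk.1
    have hcast : ((Q'.length - 1 : ℕ) : ℤ) ≤ (n : ℤ) - 1 := by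
      have : Q'.length - 1 ≤ n - 1 := by omega
      omega
    have hmul : 4 * (n : ℤ) * walkWeight w Q' ≤ 4 * (n : ℤ) * (walkWeight w P - 1) := by
      apply mul_le_mul_of_nonneg_left (by omega) (by positivity)
    have hncast : (1 : ℤ) ≤ (n : ℤ) := by exact_mod_cast hn1
    nlinarith [hP1, hQ2, hmin, hPL, hQL, hcast, hmul, hncast]
  calc walkWeight w P ≤ walkWeight w Q' := key
    _ ≤ walkWeight w Q := hQ'le
end
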